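/- The formula φ₁ = (x ≠ 1 ∧ y ≠ 1) is not an invariant of the event structure for the program (r=x; y=1; || x=y;): the configuration {init, Rx0, Wy1'} (where Wy1' = W y 1 follows the read Rx0 = R x 0) has its only read label satisfying φ₁, but its full label set does not satisfy φ₁. -/
import Mathlib


/-- Locations. -/
inductive Lc where | x | y
deriving DecidableEq

/-- Memory actions over locations `Lc` and natural-number values. -/
inductive Act where
  | init : Act
  | read (l : Lc) (v : ℕ) : Act
  | write (l : Lc) (v : ℕ) : Act
deriving DecidableEq

/-- Events of the event structure for `(r=x; y=1; || x=y;)`.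
`wy0'` is the write `W y 1` following the read `rx0 = R x 0`. -/
inductive Ev where
  | einit | rx0 | rx1 | wy0' | wy1 | ry0 | ry1 | wx0 | wx1
deriving DecidableEq

open Ev Act Lc

/-- Labelling: both writes to `y` write `1`. -/
def lab : Ev → Act
  | einit => .init
  | rx0 => .read .x 0
  | rx1 => .read .x 1
  | wy0' => .write .y 1
  | wy1 => .write .y 1
  | ry0 => .read .y 0
  | ry1 => .read .y 1
  | wx0 => .write .x 0
  | wx1 => .write .x 1

/-- Immediate program order. -/
def po : Ev → Ev → Prop := fun d e =>
  (d = einit ∧ (e = rx0 ∨ e = rx1 ∨ e = ry0 ∨ e = ry1)) ∨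
  (d = rx0 ∧ e = wy0') ∨ (d = rx1 ∧ e = wy1) ∨
  (d = ry0 ∧ e = wx0) ∨ (d = ry1 ∧ e = wx1)

/-- Conflict, inherited by program-order successors. -/
def confl : Ev → Ev → Prop := fun d e =>
  (d ∈ ({rx0, wy0'} : Set Ev) ∧ e ∈ ({rx1, wy1} : Set Ev)) ∨
  (d ∈ ({rx1, wy1} : Set Ev) ∧ e ∈ ({rx0, wy0'} : Set Ev)) ∨
  (d ∈ ({ry0, wx0} : Set Ev) ∧ e ∈ ({ry1, wx1} : Set Ev)) ∨
  (d ∈ ({ry1, wx1} : Set Ev) ∧ e ∈ ({ry0, wx0} : Set Ev))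

/-- A configuration: a finite, downward-closed, conflict-free set of events. -/
def IsConfig (C : Set Ev) : Prop :=
  C.Finite ∧ (∀ e ∈ C, ∀ d, po d e → d ∈ C) ∧ (∀ d ∈ C, ∀ e ∈ C, ¬ confl d e)

/-- The set of read labels. -/
def Reads : Set Act := {a | ∃ z v, a = Act.read z v}

/-- `A ⊨ (z ≠ v)`. -/
def SatNeq (A : Set Act) (z : Lc) (v : ℕ) : Prop :=
  ∀ a ∈ A, ∀ w : ℕ, (a = Act.read z w ∨ a = Act.write z w) → w ≠ v

/-- `A ⊨ φ₁` where `φ₁ = (x ≠ 1 ∧ y ≠ 1)`. -/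
def SatPhi1 (A : Set Act) : Prop := SatNeq A Lc.x 1 ∧ SatNeq A Lc.y 1

/-- `φ₁ = (x ≠ 1 ∧ y ≠ 1)` is not an invariant of the event structure for
`(r=x; y=1; || x=y;)`: the configuration `{init, Rx0, Wy1'}` has its only read
label satisfying `φ₁`, but its full label set does not; hence `φ₁` fails to be
an invariant. -/
theorem stmt9 :
    IsConfig ({einit, rx0, wy0'} : Set Ev) ∧
    SatPhi1 (lab '' ({einit, rx0, wy0'} : Set Ev) ∩ Reads) ∧
    ¬ SatPhi1 (lab '' ({einit, rx0, wy0'} : Set Ev)) ∧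
    ¬ (∀ C : Set Ev, IsConfig C → SatPhi1 (lab '' C ∩ Reads) → SatPhi1 (lab '' C)) := by
  have hconf : IsConfig ({einit, rx0, wy0'} : Set Ev) := by
    refine ⟨(Set.finite_singleton einit).insert rx0 |>.insert einit |>.insert wy0' |>.subset ?_, ?_, ?_⟩
    · intro e he; simp_all [Set.insert_comm]; tauto
    · intro e he d hpo
      rcases he with rfl | rfl | rfl <;>
        simp_all [po] <;> rcases hpo with ⟨rfl, h⟩ | ⟨rfl, h⟩ | ⟨rfl, h⟩ | ⟨rfl, h⟩ | ⟨rfl, h⟩ <;> simp_all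
    · intro d hd e he
      rcases hd with rfl | rfl | rfl <;> rcases he with rfl | rfl | rfl <;>
        simp [confl]
  have hsat : SatPhi1 (lab '' ({einit, rx0, wy0'} : Set Ev) ∩ Reads) := by
    constructor <;>
    · intro a ⟨⟨e, he, hlab⟩, hr⟩ w hw
      rcases he with rfl | rfl | rfl <;> subst hlab <;>
        simp_all [lab, Reads] <;> omega
  have hnot : ¬ SatPhi1 (lab '' ({einit, rx0, wy0'} : Set Ev)) := by
    rintro ⟨-, hy⟩
    exact hy (lab wy0') ⟨wy0', by simp, rfl⟩ 1 (Or.inr rfl) rfl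
  exact ⟨hconf, hsat, hnot, fun h => hnot (h _ hconf hsat)⟩
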